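/- arXiv:0712.2638 — 4 statements merged into one kernel-verified Lean document; each statement's English description precedes it below -/
import Mathlib

section
/- Let L, W ⊆ ℝ^d with L finite, and suppose every point of L lies within Euclidean distance l of W. Then for all α > l, every simplex of the Čech complex Čech^{(α−l)/2}(L) is α-witnessed by some point of W; that is, Čech^{(α−l)/2}(L) ⊆ W^α_W(L). -/
open Metric Set

/-- The Čech complex of parameter `α` on vertex set `L`: a simplex is a nonempty finite
subset of `L` whose open balls of radius `α` have a common point. -/
def CechCplx {d : ℕ} (L : Finset (EuclideanSpace ℝ (Fin d))) (α : ℝ)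
    (σ : Finset (EuclideanSpace ℝ (Fin d))) : Prop :=
  ↑σ ⊆ (↑L : Set (EuclideanSpace ℝ (Fin d))) ∧ σ.Nonempty ∧
    (⋂ x ∈ σ, Metric.ball x α).Nonempty

/-- The (Vietoris–)Rips complex of parameter `α` on vertex set `L`: a simplex is a nonempty
finite subset of `L` of diameter at most `α`. -/
def RipsCplx {d : ℕ} (L : Finset (EuclideanSpace ℝ (Fin d))) (α : ℝ)
    (σ : Finset (EuclideanSpace ℝ (Fin d))) : Prop :=
  ↑σ ⊆ (↑L : Set (EuclideanSpace ℝ (Fin d))) ∧ σ.Nonempty ∧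
    ∀ x ∈ σ, ∀ y ∈ σ, dist x y ≤ α

/-- Distance from `w` to its `(k+1)`-th nearest point of `L` (`k` is 0-indexed):
the `k`-th entry of the sorted list of distances from `w` to the points of `L`. -/
noncomputable def nthNearestDist {d : ℕ} (L : Finset (EuclideanSpace ℝ (Fin d)))
    (w : EuclideanSpace ℝ (Fin d)) (k : ℕ) : ℝ :=
  ((L.val.map fun p => dist w p).sort (· ≤ ·)).getD k 0

/-- `w` is an `α`-witness of the simplex `σ` (with vertices among `L`): all vertices of `σ`
lie within distance `d_{card σ - 1}(w) + α` of `w`. -/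
def witnesses {d : ℕ} (L : Finset (EuclideanSpace ℝ (Fin d))) (α : ℝ)
    (w : EuclideanSpace ℝ (Fin d)) (σ : Finset (EuclideanSpace ℝ (Fin d))) : Prop :=
  ∀ v ∈ σ, dist w v ≤ nthNearestDist L w (σ.card - 1) + α

/-- The `α`-witness complex of `L` relative to `Wit`: the maximal complex on vertex set `L`
all of whose faces are `α`-witnessed by points of `Wit`. -/
def WitnessCplx {d : ℕ} (Wit : Set (EuclideanSpace ℝ (Fin d)))
    (L : Finset (EuclideanSpace ℝ (Fin d))) (α : ℝ)
    (σ : Finset (EuclideanSpace ℝ (Fin d))) : Prop :=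
  ↑σ ⊆ (↑L : Set (EuclideanSpace ℝ (Fin d))) ∧ σ.Nonempty ∧
    ∀ τ ⊆ σ, τ.Nonempty → ∃ w ∈ Wit, witnesses L α w τ


lemma nthNearestDist_nonneg {d : ℕ} (L : Finset (EuclideanSpace ℝ (Fin d)))
    (w : EuclideanSpace ℝ (Fin d)) (k : ℕ) : 0 ≤ nthNearestDist L w k := by
  unfold nthNearestDist
  set lst := ((L.val.map fun p => dist w p).sort (· ≤ ·)) with hlst
  rcases lt_or_ge k lst.length with h | h
  · rw [List.getD_eq_getElem lst 0 h]
    have hmem : lst[k] ∈ lst := List.getElem_mem h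
    have hmem2 : lst[k] ∈ Multiset.map (fun p => dist w p) L.val :=
      (Multiset.mem_sort _).mp hmem
    obtain ⟨p, _, hp⟩ := Multiset.mem_map.mp hmem2
    rw [← hp]; exact dist_nonneg
  · rw [List.getD_eq_default lst 0 h]

/-- If every point of `L` lies within distance `l` of `Wit`, then for all
`α > l`, `Čech^{(α-l)/2}(L) ⊆ W^α_{Wit}(L)`. -/
theorem cech_subset_witness {d : ℕ} (L : Finset (EuclideanSpace ℝ (Fin d)))
    (Wit : Set (EuclideanSpace ℝ (Fin d))) (l : ℝ)
    (hl : ∀ x ∈ L, ∃ w ∈ Wit, dist x w ≤ l) :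
    ∀ α : ℝ, l < α → ∀ σ, CechCplx L ((α - l) / 2) σ → WitnessCplx Wit L α σ := by
  intro α hα σ ⟨hσL, hσne, c, hc⟩
  refine ⟨hσL, hσne, fun τ hτσ hτne => ?_⟩
  obtain ⟨v₀, hv₀⟩ := hτne
  obtain ⟨w, hwW, hwl⟩ := hl v₀ (by exact_mod_cast hσL (hτσ hv₀))
  refine ⟨w, hwW, fun v hv => ?_⟩
  have hdist : ∀ u ∈ σ, dist u c < (α - l) / 2 := by
    intro u hu
    have := Set.mem_iInter₂.mp hc u hu
    simpa [dist_comm] using this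
  have h1 := hdist v₀ (hτσ hv₀)
  have h2 := hdist v (hτσ hv)
  have : dist w v ≤ α := by
    calc dist w v ≤ dist w v₀ + dist v₀ c + dist c v := dist_triangle4 w v₀ c v
      _ ≤ l + (α - l) / 2 + (α - l) / 2 := by
          have h3 : dist w v₀ ≤ l := by rwa [dist_comm]
          have h4 : dist c v ≤ (α - l) / 2 := by rw [dist_comm]; exact h2.le
          exact add_le_add (add_le_add h3 h1.le) h4
      _ = α := by ring
  linarith [nthNearestDist_nonneg L w (τ.card - 1)]
end

section
/- Let L, W ⊆ ℝ^d with L finite. Suppose the distance from every point of W to its second nearest neighbor in L is at most l'. Then for all α > 0, every simplex of the α-witness complex W^α_W(L) belongs to Čech^{2(α+l')}(L): namely, for a simplex [x₀,…,x_k] with k ≥ 1 all of whose edges [x₀,x_i] are α-witnessed, one has ‖x₀ − x_i‖ ≤ 2α + 2l' for all i, so x₀ lies in all balls B(x_i, 2(α+l')). -/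
open Metric Set

lemma list_getD_nonneg (l : List ℝ) (k : ℕ) (h : ∀ x ∈ l, 0 ≤ x) : 0 ≤ l.getD k 0 := by
  rcases lt_or_ge k l.length with hk | hk
  · rw [List.getD_eq_getElem _ _ hk]
    exact h _ (List.getElem_mem _)
  · rw [List.getD_eq_default _ _ hk]

/-- If the distance from every point of `Wit` to its second nearest
neighbor in `L` is at most `l'`, then for all `α > 0`, every simplex of `W^α_{Wit}(L)`
belongs to `Čech^{2(α+l')}(L)`; moreover for such a simplex all vertices are within
distance `2α + 2l'` of each other (in particular of a fixed vertex, which then lies in all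
the balls of radius `2(α+l')`). -/
theorem witness_subset_cech {d : ℕ} (L : Finset (EuclideanSpace ℝ (Fin d)))
    (Wit : Set (EuclideanSpace ℝ (Fin d))) (l' : ℝ)
    (hl' : ∀ w ∈ Wit, nthNearestDist L w 1 ≤ l') :
    ∀ α : ℝ, 0 < α → ∀ σ, WitnessCplx Wit L α σ →
      (∀ x ∈ σ, ∀ y ∈ σ, dist x y ≤ 2 * α + 2 * l') ∧ CechCplx L (2 * (α + l')) σ := by
  classical
  intro α hα σ hσ
  obtain ⟨hsub, hne, hwit⟩ := hσ
  obtain ⟨x₀, hx₀⟩ := hne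
  obtain ⟨w₀, hw₀, -⟩ := hwit {x₀} (Finset.singleton_subset_iff.mpr hx₀)
    ⟨x₀, Finset.mem_singleton_self _⟩
  have hl'0 : 0 ≤ l' := le_trans (nthNearestDist_nonneg L w₀ 1) (hl' w₀ hw₀)
  have key : ∀ x ∈ σ, ∀ y ∈ σ, dist x y ≤ 2 * α + 2 * l' := by
    intro x hx y hy
    by_cases hxy : x = y
    · subst hxy; rw [dist_self]; positivity
    · obtain ⟨w, hw, hwitw⟩ := hwit {x, y}
        (by intro z hz; simp only [Finset.mem_insert, Finset.mem_singleton] at hz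
            rcases hz with rfl | rfl <;> assumption)
        ⟨x, by simp⟩
      have hcard : ({x, y} : Finset _).card = 2 := Finset.card_pair hxy
      have h1 := hwitw x (by simp)
      have h2 := hwitw y (by simp)
      rw [hcard] at h1 h2
      have hb := hl' w hw
      calc dist x y ≤ dist x w + dist w y := dist_triangle _ _ _
        _ = dist w x + dist w y := by rw [dist_comm x w]
        _ ≤ (nthNearestDist L w 1 + α) + (nthNearestDist L w 1 + α) := add_le_add h1 h2
        _ ≤ 2 * α + 2 * l' := by linarith
  refine ⟨key, hsub, ⟨x₀, hx₀⟩, ?_⟩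
  set R : ℝ := 2 * (α + l') with hR
  have hRpos : 0 < R := by positivity
  set n := σ.card with hn
  have hnpos : 0 < n := Finset.card_pos.mpr ⟨x₀, hx₀⟩
  have hnR : (0:ℝ) < n := by exact_mod_cast hnpos
  set c : EuclideanSpace ℝ (Fin d) := (n : ℝ)⁻¹ • ∑ y ∈ σ, y with hc
  refine ⟨c, ?_⟩
  simp only [Set.mem_iInter, mem_ball]
  intro x hx
  have hsum : (n:ℝ) • (c - x) = ∑ y ∈ σ, (y - x) := by
    rw [smul_sub, hc, smul_inv_smul₀ (ne_of_gt hnR), Finset.sum_sub_distrib]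
    congr 1
    rw [Finset.sum_const, hn, Nat.cast_smul_eq_nsmul]
  have hnorm : (n:ℝ) * ‖c - x‖ = ‖∑ y ∈ σ, (y - x)‖ := by
    rw [← hsum, norm_smul, Real.norm_eq_abs, abs_of_pos hnR]
  have hb1 : ‖∑ y ∈ σ, (y - x)‖ ≤ ∑ y ∈ σ, ‖y - x‖ := norm_sum_le _ _
  have hb2 : ∑ y ∈ σ, ‖y - x‖ ≤ (n - 1 : ℝ) * R := by
    have hsplit : ∑ y ∈ σ, ‖y - x‖ = ∑ y ∈ σ.erase x, ‖y - x‖ := by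
      rw [← Finset.add_sum_erase σ _ hx, sub_self, norm_zero, zero_add]
    rw [hsplit]
    have hle : ∑ y ∈ σ.erase x, ‖y - x‖ ≤ (σ.erase x).card • R := by
      apply Finset.sum_le_card_nsmul
      intro y hy
      have hy' : y ∈ σ := Finset.mem_of_mem_erase hy
      have := key y hy' x hx
      rw [← dist_eq_norm]
      linarith [this]
    have hcard : (σ.erase x).card = n - 1 := by rw [Finset.card_erase_of_mem hx, hn]
    rw [hcard] at hle
    calc ∑ y ∈ σ.erase x, ‖y - x‖ ≤ (n - 1) • R := hle
      _ = ((n - 1 : ℕ) : ℝ) * R := by rw [nsmul_eq_mul]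
      _ = (n - 1 : ℝ) * R := by rw [Nat.cast_sub hnpos]; push_cast; ring
  have hfin : (n:ℝ) * ‖c - x‖ < (n:ℝ) * R := by
    calc (n:ℝ) * ‖c - x‖ = ‖∑ y ∈ σ, (y - x)‖ := hnorm
      _ ≤ (n - 1 : ℝ) * R := le_trans hb1 hb2
      _ < (n:ℝ) * R := by nlinarith
  rw [dist_eq_norm]
  exact lt_of_mul_lt_mul_left hfin (le_of_lt hnR)
end

section
/- Let L ⊂ ℝ^d be a finite set of weighted points with weight function ω : L → [0,∞) of relative amplitude ν ≤ 1/2, i.e., ω(u) ≤ ν‖u−v‖ for all distinct u,v ∈ L. If c ∈ ℝ^d lies in the power cell of a point v ∈ L (that is, ‖v−c‖² − ω(v)² ≤ ‖p−c‖² − ω(p)² for all p ∈ L), then for every p ∈ L, ‖v−c‖ ≤ ((1+ν²)/(1−ν²))·‖p−c‖. -/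
/-- Let `L ⊂ ℝ^d` be finite with weights `ω : L → [0,∞)` of relative
amplitude `ν ≤ 1/2` (i.e. `ω u ≤ ν ‖u − v‖` for distinct `u, v ∈ L`).  If `c` lies in the
power cell of `v ∈ L`, then for every `p ∈ L`,
`‖v − c‖ ≤ ((1 + ν²)/(1 − ν²)) ‖p − c‖`. -/
theorem power_cell_dist_bound {d : ℕ} (L : Finset (EuclideanSpace ℝ (Fin d)))
    (ω : EuclideanSpace ℝ (Fin d) → ℝ) (ν : ℝ) (hν0 : 0 ≤ ν) (hν : ν ≤ 1 / 2)
    (hω0 : ∀ u ∈ L, 0 ≤ ω u)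
    (hamp : ∀ u ∈ L, ∀ v ∈ L, u ≠ v → ω u ≤ ν * dist u v)
    (v : EuclideanSpace ℝ (Fin d)) (hv : v ∈ L) (c : EuclideanSpace ℝ (Fin d))
    (hc : ∀ p ∈ L, dist v c ^ 2 - ω v ^ 2 ≤ dist p c ^ 2 - ω p ^ 2) :
    ∀ p ∈ L, dist v c ≤ (1 + ν ^ 2) / (1 - ν ^ 2) * dist p c := by
  intro p hp
  have hν2 : ν ^ 2 ≤ (1/2 : ℝ) ^ 2 := by
    apply pow_le_pow_left₀ hν0 hν
  have hden : (0 : ℝ) < 1 - ν ^ 2 := by nlinarith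
  by_cases hpv : p = v
  · subst hpv
    have : (1 : ℝ) ≤ (1 + ν ^ 2) / (1 - ν ^ 2) := by
      rw [le_div_iff₀ hden]; nlinarith
    nlinarith [dist_nonneg (x := p) (y := c)]
  · set a := dist v c with ha
    set b := dist p c with hb
    have ha0 : 0 ≤ a := dist_nonneg
    have hb0 : 0 ≤ b := dist_nonneg
    have h1 : ω v ≤ ν * dist v p := hamp v hv p hp (fun h => hpv h.symm)
    have h2 : 0 ≤ ω p := hω0 p hp
    have htri : dist v p ≤ a + b := by
      rw [ha, hb]
      calc dist v p ≤ dist v c + dist c p := dist_triangle v c p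
      _ = dist v c + dist p c := by rw [dist_comm c p]
    have hvp0 : 0 ≤ dist v p := dist_nonneg
    have hωv0 : 0 ≤ ω v := hω0 v hv
    have hkey : a ^ 2 ≤ b ^ 2 + ν ^ 2 * (a + b) ^ 2 := by
      have := hc p hp
      have hω2 : ω v ^ 2 ≤ ν ^ 2 * (a + b) ^ 2 := by
        have : ω v ≤ ν * (a + b) := le_trans h1 (by nlinarith)
        nlinarith
      nlinarith
    -- ((1-ν²)a - (1+ν²)b)(a+b) ≤ 0
    have hfac : ((1 - ν ^ 2) * a - (1 + ν ^ 2) * b) * (a + b) ≤ 0 := by nlinarith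
    rcases eq_or_lt_of_le (add_nonneg ha0 hb0) with hab | hab
    · have haz : a = 0 := by nlinarith
      rw [haz]
      positivity
    · have : (1 - ν ^ 2) * a ≤ (1 + ν ^ 2) * b := by nlinarith
      rw [div_mul_eq_mul_div, le_div_iff₀ hden]
      nlinarith
end

section
/- Let X ⊂ ℝ^d be compact, W ⊆ X a δ-sample of X, and L ⊆ W an ε-sparse ε-sample of W. Let ω be an assignment of weights on L of relative amplitude ν ≤ 1/2. If σ is a simplex whose vertices all lie in L and whose dual weighted Voronoi face meets X at a point c, then every vertex v of σ is α-witnessed along with σ by the point w ∈ W nearest to c, provided α ≥ (2/(1−ν²))(δ + ν²ε). Consequently, the weighted Delaunay triangulation of L restricted to X is contained in the α-witness complex W^α_W(L) for such α. -/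
open Metric Set

lemma nth_mem_aux {d : ℕ} (L : Finset (EuclideanSpace ℝ (Fin d)))
    (w : EuclideanSpace ℝ (Fin d)) (k : ℕ) (hk : k < L.card) :
    ∃ p ∈ L, nthNearestDist L w k = dist w p := by
  have hlen : ((L.val.map fun p => dist w p).sort (· ≤ ·)).length = L.card := by
    rw [Multiset.length_sort, Multiset.card_map]; rfl
  have hk' : k < ((L.val.map fun p => dist w p).sort (· ≤ ·)).length := by
    rw [hlen]; exact hk
  have hmem : ((L.val.map fun p => dist w p).sort (· ≤ ·)).getD k 0 ∈
      (L.val.map fun p => dist w p).sort (· ≤ ·) := by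
    rw [List.getD_eq_getElem _ _ hk']
    exact List.getElem_mem _
  rw [Multiset.mem_sort, Multiset.mem_map] at hmem
  obtain ⟨p, hp, hpd⟩ := hmem
  exact ⟨p, hp, hpd.symm⟩

/-- Arithmetic core, near case (`b ≤ s`). -/
lemma arith_near {ν s a b wv wp : ℝ} (hν0 : 0 ≤ ν) (hm1 : 0 < 1 - ν ^ 2)
    (hb : 0 ≤ b) (hwv0 : 0 ≤ wv) (hwp0 : 0 ≤ wp)
    (hpw : a ^ 2 - wv ^ 2 ≤ b ^ 2 - wp ^ 2) (hωv : wv ≤ ν * (a + b))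
    (hab : b < a) (hbs : b ≤ s) :
    a - b ≤ 2 * ν ^ 2 * s / (1 - ν ^ 2) := by
  rw [le_div_iff₀ hm1]
  have hwv2 : wv ^ 2 ≤ ν ^ 2 * (a + b) ^ 2 := by nlinarith [mul_le_mul hωv hωv hwv0 (by nlinarith : 0 ≤ ν * (a + b))]
  have h3 : a ^ 2 ≤ b ^ 2 + ν ^ 2 * (a + b) ^ 2 := by nlinarith
  have hpos : (0:ℝ) < a + b := by linarith
  have h4 : a - b ≤ ν ^ 2 * (a + b) := by nlinarith
  nlinarith [mul_nonneg (sq_nonneg ν) (sub_nonneg.mpr hbs)]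

/-- Arithmetic core, far case (`s < b`). -/
lemma arith_far {ν s a b wv : ℝ} (hν0 : 0 ≤ ν) (hm1 : 0 < 1 - ν ^ 2)
    (ha : 0 ≤ a) (hs : 0 ≤ s) (hwv0 : 0 ≤ wv)
    (hpw : a ^ 2 ≤ b ^ 2 + wv ^ 2) (hωv : wv ≤ ν * (a + s))
    (h5 : a ^ 2 ≤ s ^ 2 + wv ^ 2) (hsb : s < b) (hab : b < a) :
    a - b ≤ 2 * ν ^ 2 * s / (1 - ν ^ 2) := by
  rw [le_div_iff₀ hm1]
  have hwv2 : wv ^ 2 ≤ ν ^ 2 * (a + s) ^ 2 := by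
    nlinarith [mul_le_mul hωv hωv hwv0 (by nlinarith : 0 ≤ ν * (a + s))]
  have h6 : (1 - ν ^ 2) * a ≤ (1 + ν ^ 2) * s := by
    nlinarith [sq_nonneg (a + s)]
  have hpos : (0:ℝ) < a + b := by linarith
  have h7 : a - b ≤ ν ^ 2 * (a + s) := by nlinarith
  nlinarith [mul_nonneg (sq_nonneg ν) (sub_nonneg.mpr (le_of_lt hsb)),
    mul_nonneg (sq_nonneg ν) hs]

/-- Let `X ⊂ ℝ^d` be compact, `Wit ⊆ X` a `δ`-sample of `X`, and
`L ⊆ Wit` an `ε`-sparse `ε`-sample of `Wit`, with weights `ω` of relative amplitude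
`ν ≤ 1/2`.  If `σ` is a simplex with vertices in `L` whose dual weighted Voronoi face
meets `X` (at some point `c`), then `σ` belongs to the `α`-witness complex `W^α_{Wit}(L)`
provided `α ≥ (2/(1−ν²))(δ + ν²ε)`; consequently the weighted Delaunay triangulation of
`L` restricted to `X` is contained in `W^α_{Wit}(L)`. -/
theorem wdel_subset_witness {d : ℕ} (X : Set (EuclideanSpace ℝ (Fin d))) (hX : IsCompact X)
    (Wit : Set (EuclideanSpace ℝ (Fin d))) (hWX : Wit ⊆ X)
    (δ : ℝ) (hδ : ∀ x ∈ X, ∃ w ∈ Wit, dist x w ≤ δ)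
    (L : Finset (EuclideanSpace ℝ (Fin d)))
    (hLW : (↑L : Set (EuclideanSpace ℝ (Fin d))) ⊆ Wit)
    (ε : ℝ) (hsamp : ∀ w ∈ Wit, ∃ v ∈ L, dist w v ≤ ε)
    (hsparse : ∀ u ∈ L, ∀ v ∈ L, u ≠ v → ε ≤ dist u v)
    (ω : EuclideanSpace ℝ (Fin d) → ℝ) (ν : ℝ) (hν0 : 0 ≤ ν) (hν : ν ≤ 1 / 2)
    (hω0 : ∀ u ∈ L, 0 ≤ ω u)
    (hamp : ∀ u ∈ L, ∀ v ∈ L, u ≠ v → ω u ≤ ν * dist u v)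
    (α : ℝ) (hα : 2 / (1 - ν ^ 2) * (δ + ν ^ 2 * ε) ≤ α) :
    ∀ σ : Finset (EuclideanSpace ℝ (Fin d)),
      ↑σ ⊆ (↑L : Set (EuclideanSpace ℝ (Fin d))) → σ.Nonempty →
      (∃ c ∈ X, ∀ v ∈ σ, ∀ p ∈ L, dist v c ^ 2 - ω v ^ 2 ≤ dist p c ^ 2 - ω p ^ 2) →
      WitnessCplx Wit L α σ := by
  rintro σ hσL hσne ⟨c, hcX, hpow⟩
  obtain ⟨w, hwW, hwc⟩ := hδ c hcX
  obtain ⟨ℓ, hℓL, hwℓ⟩ := hsamp w hwW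
  have hδ0 : 0 ≤ δ := le_trans dist_nonneg hwc
  have hε0 : 0 ≤ ε := le_trans dist_nonneg hwℓ
  have hm1 : (0:ℝ) < 1 - ν ^ 2 := by nlinarith
  have hs0 : (0:ℝ) ≤ δ + ε := by linarith
  have hcℓ : dist c ℓ ≤ δ + ε := by
    calc dist c ℓ ≤ dist c w + dist w ℓ := dist_triangle _ _ _
    _ ≤ δ + ε := add_le_add hwc hwℓ
  have hB0 : 0 ≤ 2 * ν ^ 2 * (δ + ε) / (1 - ν ^ 2) := by positivity
  have hαbound : 2 * δ + 2 * ν ^ 2 * (δ + ε) / (1 - ν ^ 2) ≤ α := by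
    have heq : 2 * δ + 2 * ν ^ 2 * (δ + ε) / (1 - ν ^ 2)
        = 2 / (1 - ν ^ 2) * (δ + ν ^ 2 * ε) := by
      field_simp
      ring
    linarith [heq ▸ hα]
  have key : ∀ v ∈ σ, ∀ p ∈ L, dist w v ≤ dist w p + α := by
    intro v hv p hpL
    have hvL : v ∈ L := hσL hv
    have key2 : dist v c - dist p c ≤ 2 * ν ^ 2 * (δ + ε) / (1 - ν ^ 2) := by
      have ha : 0 ≤ dist v c := dist_nonneg
      have hb : 0 ≤ dist p c := dist_nonneg
      by_cases hab : dist v c ≤ dist p c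
      · linarith
      push_neg at hab
      by_cases hpv : p = v
      · subst hpv; linarith
      have hωv0 := hω0 v hvL
      have hωp0 := hω0 p hpL
      have hpw := hpow v hv p hpL
      by_cases hbs : dist p c ≤ δ + ε
      · have hωv : ω v ≤ ν * (dist v c + dist p c) := by
          refine le_trans (hamp v hvL p hpL (fun h => hpv h.symm)) ?_
          have hvp : dist v p ≤ dist v c + dist p c := by
            calc dist v p ≤ dist v c + dist c p := dist_triangle _ _ _
            _ = dist v c + dist p c := by rw [dist_comm c p]
          exact mul_le_mul_of_nonneg_left hvp hν0
        exact arith_near hν0 hm1 hb hωv0 hωp0 hpw hωv hab hbs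
      · push_neg at hbs
        have hℓv : ℓ ≠ v := by
          intro h
          have hvs : dist v c ≤ δ + ε := by rw [← h, dist_comm]; exact hcℓ
          linarith
        have hωv : ω v ≤ ν * (dist v c + (δ + ε)) := by
          refine le_trans (hamp v hvL ℓ hℓL (fun h => hℓv h.symm)) ?_
          have hvℓ : dist v ℓ ≤ dist v c + (δ + ε) := by
            calc dist v ℓ ≤ dist v c + dist c ℓ := dist_triangle _ _ _
            _ ≤ dist v c + (δ + ε) := by linarith
          exact mul_le_mul_of_nonneg_left hvℓ hν0
        have hpw' : dist v c ^ 2 ≤ dist p c ^ 2 + ω v ^ 2 := by nlinarith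
        have hpwℓ := hpow v hv ℓ hℓL
        have hωℓ0 := hω0 ℓ hℓL
        have hℓc2 : dist ℓ c ^ 2 ≤ (δ + ε) ^ 2 := by
          have h1 : dist ℓ c ≤ δ + ε := by rw [dist_comm]; exact hcℓ
          nlinarith [dist_nonneg (x := ℓ) (y := c)]
        have h5 : dist v c ^ 2 ≤ (δ + ε) ^ 2 + ω v ^ 2 := by nlinarith
        exact arith_far hν0 hm1 ha hs0 hωv0 hpw' hωv h5 hbs hab
    have h1 : dist w v ≤ dist w c + dist v c := by
      rw [dist_comm v c]; exact dist_triangle _ _ _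
    have h2 : dist p c ≤ dist w p + dist w c := by
      calc dist p c ≤ dist p w + dist w c := dist_triangle _ _ _
      _ = dist w p + dist w c := by rw [dist_comm p w]
    have hwcδ : dist w c ≤ δ := by rw [dist_comm]; exact hwc
    linarith
  refine ⟨hσL, hσne, ?_⟩
  intro τ hτσ hτne
  refine ⟨w, hwW, ?_⟩
  intro v hv
  have hτL : τ ⊆ L := by
    intro x hx
    exact_mod_cast hσL (hτσ hx)
  have hk : τ.card - 1 < L.card :=
    lt_of_lt_of_le (Nat.sub_lt (Finset.card_pos.mpr hτne) one_pos) (Finset.card_le_card hτL)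
  obtain ⟨p, hpL, hpd⟩ := nth_mem_aux L w (τ.card - 1) hk
  rw [hpd]
  exact key v (hτσ hv) p hpL
end
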